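/- Let λ ∈ ℂ∖{0}. For the module Ω_𝒯(λ,1/2): (i) the pair (Q, x·Q) is invariant; (ii) every invariant pair (S₀,S₁) for Ω_𝒯(λ,1/2) with S₁ ⊆ x·Q and (S₀,S₁) ≠ ({0},{0}) satisfies S₀ = Q and S₁ = x·Q. In other words, (Q, x·Q) is an irreducible submodule of Ω_𝒯(λ,1/2). -/
import Mathlib


/- STATEMENT 18: For λ ≠ 0 and the module Ω_𝒯(λ,1/2): (i) the pair (Q, x·Q) is
invariant; (ii) every invariant pair (S₀,S₁) with S₁ ⊆ x·Q and (S₀,S₁) ≠ ({0},{0})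
satisfies S₀ = Q and S₁ = x·Q.  Thus (Q, x·Q) is an irreducible submodule of
Ω_𝒯(λ,1/2). -/

open Polynomial

noncomputable section

abbrev Qp := Polynomial ℂ

/-- `L_m(p,q) = (λ^m(x+m(b−1))·p(x−m), λ^m(x+m(b−1/2))·q(x−m))` -/
def OL (lam b : ℂ) (m : ℤ) : Qp × Qp → Qp × Qp :=
  fun w => (lam ^ m • ((X + C ((m : ℂ) * (b - 1))) * w.1.comp (X - C (m : ℂ))),
            lam ^ m • ((X + C ((m : ℂ) * (b - 1 / 2))) * w.2.comp (X - C (m : ℂ))))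

/-- `H_m(p,q) = (−2b·λ^m·p(x−m), (1−2b)·λ^m·q(x−m))` -/
def OH (lam b : ℂ) (m : ℤ) : Qp × Qp → Qp × Qp :=
  fun w => ((-2 * b * lam ^ m) • w.1.comp (X - C (m : ℂ)),
            ((1 - 2 * b) * lam ^ m) • w.2.comp (X - C (m : ℂ)))

/-- `G_m⁺(p,q) = (0, −2λ^m(x+m(2b−1))·p(x−m))` -/
def OGp (lam b : ℂ) (m : ℤ) : Qp × Qp → Qp × Qp :=
  fun w => (0, (-2 * lam ^ m) • ((X + C ((m : ℂ) * (2 * b - 1))) * w.1.comp (X - C (m : ℂ))))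

/-- `G_m⁻(p,q) = (λ^m·q(x−m), 0)` -/
def OGm (lam : ℂ) (m : ℤ) : Qp × Qp → Qp × Qp :=
  fun w => (lam ^ m • w.2.comp (X - C (m : ℂ)), 0)

/-- `(S₀, S₁)` is an invariant pair for `Ω_𝒯(λ,b)`. -/
def OInvT (lam b : ℂ) (S₀ S₁ : Submodule ℂ Qp) : Prop :=
  ∀ m : ℤ, ∀ p ∈ S₀, ∀ q ∈ S₁,
    (OL lam b m (p, q)).1 ∈ S₀ ∧ (OL lam b m (p, q)).2 ∈ S₁ ∧
    (OH lam b m (p, q)).1 ∈ S₀ ∧ (OH lam b m (p, q)).2 ∈ S₁ ∧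
    (OGp lam b m (p, q)).1 ∈ S₀ ∧ (OGp lam b m (p, q)).2 ∈ S₁ ∧
    (OGm lam m (p, q)).1 ∈ S₀ ∧ (OGm lam m (p, q)).2 ∈ S₁

/-- the subspace `x·ℂ[x]` -/
def xQ : Submodule ℂ Qp := LinearMap.range (LinearMap.mulLeft ℂ (X : Qp))

lemma shift_descent (p : Qp) (h : p.comp (X - C 1) = p) : p.natDegree = 0 := by
  have heval : ∀ n : ℕ, p.eval (n : ℂ) = p.eval 0 := by
    intro n
    induction n with
    | zero => norm_num
    | succ n ih =>
      have h2 := congrArg (Polynomial.eval ((n : ℂ) + 1)) h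
      rw [eval_comp] at h2
      simp only [eval_sub, eval_X, eval_C, add_sub_cancel_right] at h2
      push_cast
      rw [← h2, ih]
  have hroot : p - C (p.eval 0) = 0 := by
    apply Polynomial.eq_zero_of_infinite_isRoot
    apply Set.infinite_of_injective_forall_mem (f := fun n : ℕ => (n : ℂ))
      Nat.cast_injective
    intro n
    simp [IsRoot, heval n]
  have : p = C (p.eval 0) := by linear_combination hroot
  rw [this, natDegree_C]

lemma smul_cancel {S : Submodule ℂ Qp} {c : ℂ} (hc : c ≠ 0) {v : Qp}
    (h : c • v ∈ S) : v ∈ S := (S.smul_mem_iff hc).mp h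

lemma submodule_top (S : Submodule ℂ Qp)
    (hshift : ∀ p ∈ S, p.comp (X - C 1) ∈ S)
    (hmul : ∀ p ∈ S, X * p ∈ S) :
    ∀ p ∈ S, p ≠ 0 → S = ⊤ := by
  have hone : ∀ d : ℕ, ∀ p ∈ S, p ≠ 0 → p.natDegree ≤ d → (1 : Qp) ∈ S := by
    intro d
    induction d with
    | zero =>
      intro p hp hne hdeg
      have hc : p = C (p.coeff 0) := p.eq_C_of_natDegree_le_zero hdeg
      have h0 : p.coeff 0 ≠ 0 := fun h => hne (by rw [hc, h, map_zero])
      apply smul_cancel h0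
      rw [smul_eq_C_mul, mul_one, ← hc]; exact hp
    | succ d ih =>
      intro p hp hne hdeg
      rcases Nat.lt_or_ge p.natDegree (d + 1) with h | h
      · exact ih p hp hne (Nat.lt_succ_iff.mp h)
      have hd : p.natDegree = d + 1 := le_antisymm hdeg h
      set q := p - p.comp (X - C 1) with hq
      have hqS : q ∈ S := S.sub_mem hp (hshift p hp)
      have hqne : q ≠ 0 := by
        intro h0
        have h1 : p.comp (X - C 1) = p := by
          have := sub_eq_zero.mp h0; exact this.symm
        have := shift_descent p h1
        omega
      have hx1 : ((X : Qp) - C 1).natDegree = 1 := natDegree_X_sub_C 1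
      have hcompdeg : (p.comp (X - C 1)).natDegree = p.natDegree := by
        rw [natDegree_comp, hx1, mul_one]
      have hcomplead : (p.comp (X - C 1)).leadingCoeff = p.leadingCoeff := by
        rw [leadingCoeff_comp (by rw [hx1]; norm_num),
          (monic_X_sub_C (1:ℂ)).leadingCoeff, one_pow, mul_one]
      have hcoeff : q.coeff (d + 1) = 0 := by
        rw [hq, coeff_sub]
        have e1 : p.coeff (d + 1) = p.leadingCoeff := by
          rw [leadingCoeff, hd]
        have e2 : (p.comp (X - C 1)).coeff (d + 1) = (p.comp (X - C 1)).leadingCoeff := by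
          rw [leadingCoeff, hcompdeg, hd]
        rw [e1, e2, hcomplead, sub_self]
      have hqdeg : q.natDegree ≤ d := by
        have h1 : q.natDegree ≤ d + 1 := by
          have h4 := natDegree_sub_le p (p.comp (X - C 1))
          rw [hcompdeg, hd, max_self] at h4
          exact h4
        rcases Nat.lt_or_ge q.natDegree (d + 1) with h2 | h2
        · omega
        · exfalso
          have h3 : q.natDegree = d + 1 := le_antisymm h1 h2
          have := leadingCoeff_ne_zero.mpr hqne
          rw [leadingCoeff, h3, hcoeff] at this
          exact this rfl
      exact ih q hqS hqne hqdeg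
  intro p hp hne
  have h1 : (1 : Qp) ∈ S := hone p.natDegree p hp hne le_rfl
  have hmono : ∀ n : ℕ, (X : Qp) ^ n ∈ S := by
    intro n
    induction n with
    | zero => simpa using h1
    | succ n ih => rw [pow_succ, mul_comm]; exact hmul _ ih
  have hall : ∀ r : Qp, r ∈ S := by
    intro r
    induction r using Polynomial.induction_on' with
    | add a b ha hb => exact S.add_mem ha hb
    | monomial n a =>
      have := S.smul_mem a (hmono n)
      rwa [smul_eq_C_mul, C_mul_X_pow_eq_monomial] at this
  rw [eq_top_iff]
  intro r _
  exact hall r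

theorem stmt18 (lam : ℂ) (hlam : lam ≠ 0) :
    OInvT lam (1 / 2) ⊤ xQ ∧
    (∀ S₀ S₁ : Submodule ℂ Qp, OInvT lam (1 / 2) S₀ S₁ → S₁ ≤ xQ →
      ¬(S₀ = ⊥ ∧ S₁ = ⊥) → S₀ = ⊤ ∧ S₁ = xQ) := by
  have hmemxQ : ∀ r : Qp, X * r ∈ xQ := fun r => ⟨r, by simp⟩
  constructor
  · intro m p _ q hq
    obtain ⟨q', rfl⟩ := hq
    simp only [LinearMap.mulLeft_apply] at *
    refine ⟨trivial, ?_, trivial, ?_, trivial, ?_, trivial, ?_⟩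
    · -- OL second component
      simp only [OL]
      apply xQ.smul_mem
      rw [show ((m : ℂ) * (1 / 2 - 1 / 2)) = 0 by ring, map_zero, add_zero]
      exact hmemxQ _
    · simp only [OH]
      rw [show ((1 : ℂ) - 2 * (1 / 2)) * lam ^ m = 0 by norm_num, zero_smul]
      exact xQ.zero_mem
    · simp only [OGp]
      apply xQ.smul_mem
      rw [show ((m : ℂ) * (2 * (1 / 2) - 1)) = 0 by ring, map_zero, add_zero]
      exact hmemxQ _
    · simp only [OGm]
      exact xQ.zero_mem
  · intro S₀ S₁ hinv hle hne
    -- derived closure properties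
    have hH : ∀ p ∈ S₀, ∀ m : ℤ, p.comp (X - C (m : ℂ)) ∈ S₀ := by
      intro p hp m
      have h := (hinv m p hp 0 S₁.zero_mem).2.2.1
      simp only [OH] at h
      refine smul_cancel (c := -2 * (1 / 2 : ℂ) * lam ^ m) ?_ h
      simp [zpow_ne_zero, hlam]
    have hGp : ∀ p ∈ S₀, ∀ m : ℤ, X * p.comp (X - C (m : ℂ)) ∈ S₁ := by
      intro p hp m
      have h := (hinv m p hp 0 S₁.zero_mem).2.2.2.2.2.1
      simp only [OGp] at h
      rw [show ((m : ℂ) * (2 * (1 / 2) - 1)) = 0 by ring, map_zero, add_zero] at h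
      refine smul_cancel (c := -2 * lam ^ m) ?_ h
      simp [zpow_ne_zero, hlam]
    have hGm : ∀ q ∈ S₁, ∀ m : ℤ, q.comp (X - C (m : ℂ)) ∈ S₀ := by
      intro q hq m
      have h := (hinv m 0 S₀.zero_mem q hq).2.2.2.2.2.2.1
      simp only [OGm] at h
      exact smul_cancel (zpow_ne_zero m hlam) h
    -- S₀ is nontrivial
    have hS₀ne : S₀ ≠ ⊥ := by
      intro h0
      apply hne
      refine ⟨h0, ?_⟩
      rw [Submodule.eq_bot_iff]
      intro q hq
      have := hGm q hq 0
      simp only [Int.cast_zero, map_zero, sub_zero, comp_X] at this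
      rw [h0, Submodule.mem_bot] at this
      exact this
    obtain ⟨p₀, hp₀, hp₀ne⟩ := Submodule.ne_bot_iff S₀ |>.mp hS₀ne
    have hmul : ∀ p ∈ S₀, X * p ∈ S₀ := by
      intro p hp
      have h1 := hGp p hp 0
      simp only [Int.cast_zero, map_zero, sub_zero, comp_X] at h1
      have h2 := hGm _ h1 0
      simpa using h2
    have hshift : ∀ p ∈ S₀, p.comp (X - C 1) ∈ S₀ := by
      intro p hp
      have := hH p hp 1
      simpa using this
    have hS₀top : S₀ = ⊤ := submodule_top S₀ hshift hmul p₀ hp₀ hp₀ne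
    refine ⟨hS₀top, le_antisymm hle ?_⟩
    intro v hv
    obtain ⟨r, rfl⟩ := hv
    simp only [LinearMap.mulLeft_apply]
    have h1 := hGp r (by rw [hS₀top]; trivial) 0
    simpa using h1

end
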